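/- arXiv:1710.01721 — 2 statements merged into one kernel-verified Lean document; each statement's English description precedes it below -/
import Mathlib

section
/- Let A be a real n×n matrix, let λ ≥ 0 and ε > 0, let 0 ≤ p ≤ n−1, and let P be a real symmetric n×n matrix with inertia p such that AᵀP + PA ⪯ −2λP − εI. Let μ_max(P) > 0 denote the largest eigenvalue of P and set ε₂ = ε/μ_max(P). Then for every t ≥ 0 and every x ∈ ℝⁿ with xᵀPx ≥ 0, one has (exp(−At)x)ᵀP(exp(−At)x) ≥ e^((2λ + ε₂)t) · xᵀPx. -/
open Matrix

/-- `M ⪯ N` iff `N - M` is positive semidefinite. -/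
def matLE {m : Type*} [Fintype m] (M N : Matrix m m ℝ) : Prop := (N - M).PosSemidef

/-- A real symmetric matrix has inertia `p`: exactly `p` negative eigenvalues,
`card m − p` positive eigenvalues, and no zero eigenvalues, counted with multiplicity
(as roots of the characteristic polynomial). -/
def hasInertia {m : Type*} [Fintype m] [DecidableEq m]
    (P : Matrix m m ℝ) (p : ℕ) : Prop :=
  Multiset.countP (fun μ : ℝ => μ < 0) P.charpoly.roots = p ∧
  Multiset.countP (fun μ : ℝ => 0 < μ) P.charpoly.roots = Fintype.card m - p ∧
  (0 : ℝ) ∉ P.charpoly.roots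

/-- Number of complex eigenvalues (with algebraic multiplicity) of a real matrix
with strictly positive real part. -/
noncomputable def posReCount {m : Type*} [Fintype m] [DecidableEq m]
    (A : Matrix m m ℝ) : ℕ :=
  Multiset.countP (fun μ : ℂ => 0 < μ.re) (A.map Complex.ofReal).charpoly.roots

/-- Number of complex eigenvalues (with algebraic multiplicity) of a real matrix
with strictly negative real part. -/
noncomputable def negReCount {m : Type*} [Fintype m] [DecidableEq m]
    (A : Matrix m m ℝ) : ℕ :=
  Multiset.countP (fun μ : ℂ => μ.re < 0) (A.map Complex.ofReal).charpoly.roots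

/-- The quadratic form `xᵀ P x`. -/
def quadForm {m : Type*} [Fintype m] (P : Matrix m m ℝ) (x : m → ℝ) : ℝ :=
  x ⬝ᵥ P.mulVec x

/-- Euclidean norm on `m → ℝ`. -/
noncomputable def enorm {m : Type*} [Fintype m] (x : m → ℝ) : ℝ :=
  Real.sqrt (x ⬝ᵥ x)

/-- `J` is the Jacobian of `f`. -/
def IsJacobianOf {n : ℕ} (J : (Fin n → ℝ) → Matrix (Fin n) (Fin n) ℝ)
    (f : (Fin n → ℝ) → (Fin n → ℝ)) : Prop :=
  ∀ x, HasFDerivAt f (LinearMap.toContinuousLinearMap ((J x).mulVecLin)) x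

/-! Along `y s = exp (-s A) x` the Lyapunov function `V s = yᵀ P y` satisfies
`V' = -yᵀ (AᵀP + PA) y ≥ 2λ V + ε ‖y‖²`, and `V ≤ μmax ‖y‖²` turns this into
`V' ≥ (2λ + ε / μmax) V`. Hence `exp (-(2λ + ε / μmax) s) * V s` is monotone. -/

theorem Matrix.posSemidef_algebraMap_sub_of_spectrum_le {m : Type*} [Fintype m] [DecidableEq m]
    {P : Matrix m m ℝ} (hP : P.IsHermitian) {μ : ℝ} (h : ∀ a ∈ spectrum ℝ P, a ≤ μ) :
    (algebraMap ℝ (Matrix m m ℝ) μ - P).PosSemidef := by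
  refine posSemidef_iff_isHermitian_and_spectrum_nonneg.2
    ⟨(IsSelfAdjoint.algebraMap _ (.all μ)).sub hP, ?_⟩
  rw [← spectrum.singleton_sub_eq]
  rintro _ ⟨_, rfl, a, ha, rfl⟩
  exact sub_nonneg.2 (h a ha)

section QuadForm

variable {m : Type*} [Fintype m]

theorem quadForm_le_of_spectrum_le [DecidableEq m] {P : Matrix m m ℝ} (hP : P.IsHermitian)
    {μ : ℝ} (h : ∀ a ∈ spectrum ℝ P, a ≤ μ) (x : m → ℝ) :
    quadForm P x ≤ μ * (x ⬝ᵥ x) := by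
  simpa [quadForm, Algebra.algebraMap_eq_smul_one, sub_mulVec, smul_mulVec] using
    (posSemidef_algebraMap_sub_of_spectrum_le hP h).dotProduct_mulVec_nonneg x

theorem matLE.quadForm_le {M N : Matrix m m ℝ} (h : matLE M N) (x : m → ℝ) :
    quadForm M x ≤ quadForm N x := by
  simpa [quadForm, sub_mulVec] using h.dotProduct_mulVec_nonneg x

theorem quadForm_transpose_mul_add_mul (B P : Matrix m m ℝ) (x : m → ℝ) :
    quadForm (Bᵀ * P + P * B) x = (B *ᵥ x) ⬝ᵥ (P *ᵥ x) + x ⬝ᵥ (P *ᵥ (B *ᵥ x)) := by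
  rw [quadForm, add_mulVec, dotProduct_add, ← mulVec_mulVec, ← mulVec_mulVec,
    dotProduct_mulVec x Bᵀ, vecMul_transpose]

theorem mul_quadForm_le_neg_quadForm_of_matLE [DecidableEq m] {A P : Matrix m m ℝ}
    (hP : P.IsHermitian) {lam eps μ : ℝ} (heps : 0 ≤ eps) (hμ : 0 < μ)
    (hspec : ∀ a ∈ spectrum ℝ P, a ≤ μ)
    (hLMI : matLE (Aᵀ * P + P * A) (-((2 * lam) • P) - eps • (1 : Matrix m m ℝ))) (y : m → ℝ) :
    (2 * lam + eps / μ) * quadForm P y ≤ -quadForm (Aᵀ * P + P * A) y := by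
  have hLy := hLMI.quadForm_le y
  simp only [quadForm, sub_mulVec, neg_mulVec, smul_mulVec, one_mulVec, dotProduct_sub,
    dotProduct_neg, dotProduct_smul, smul_eq_mul] at hLy
  have hrate : eps / μ * quadForm P y ≤ eps * (y ⬝ᵥ y) :=
    calc eps / μ * quadForm P y ≤ eps / μ * (μ * (y ⬝ᵥ y)) :=
          mul_le_mul_of_nonneg_left (quadForm_le_of_spectrum_le hP hspec y) (by positivity)
      _ = eps * (y ⬝ᵥ y) := by field_simp
  unfold quadForm at hrate ⊢
  linarith

end QuadForm

section Deriv

variable {𝕜 : Type*} [NontriviallyNormedField 𝕜] {n : Type*} [Fintype n] {t : 𝕜}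

theorem HasDerivAt.dotProduct {u v : 𝕜 → n → 𝕜} {u' v' : n → 𝕜} (hu : HasDerivAt u u' t)
    (hv : HasDerivAt v v' t) :
    HasDerivAt (fun s => u s ⬝ᵥ v s) (u' ⬝ᵥ v t + u t ⬝ᵥ v') t := by
  simp only [_root_.dotProduct, ← Finset.sum_add_distrib]
  exact HasDerivAt.fun_sum fun i _ => (hasDerivAt_pi.1 hu i).mul (hasDerivAt_pi.1 hv i)

theorem HasDerivAt.mulVec {m : Type*} {v : 𝕜 → n → 𝕜} {v' : n → 𝕜} (M : Matrix m n 𝕜)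
    (hv : HasDerivAt v v' t) :
    HasDerivAt (fun s => M *ᵥ v s) (M *ᵥ v') t := by
  have := hasDerivAt_pi.2 fun i => (hasDerivAt_const t (M i)).dotProduct hv
  simp only [zero_dotProduct, zero_add] at this
  exact this

end Deriv

section MatrixExp

-- Matrices carry no global norm; any operator norm makes `exp` differentiable, and the
-- statements below do not depend on the choice.
attribute [local instance] Matrix.linftyOpNormedAddCommGroup Matrix.linftyOpNormedRing
  Matrix.linftyOpNormedAlgebra

variable {m : Type*} [Fintype m] [DecidableEq m]

theorem hasDerivAt_exp_smul_mulVec (B : Matrix m m ℝ) (x : m → ℝ) (t : ℝ) :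
    HasDerivAt (fun s : ℝ => NormedSpace.exp (s • B) *ᵥ x)
      (B *ᵥ (NormedSpace.exp (t • B) *ᵥ x)) t := by
  rw [mulVec_mulVec]
  exact (LinearMap.applyₗ x ∘ₗ toLin'.toLinearMap).toContinuousLinearMap.hasFDerivAt.comp_hasDerivAt
    t (hasDerivAt_exp_smul_const' B t)

theorem hasDerivAt_quadForm_exp_smul_mulVec (B P : Matrix m m ℝ) (x : m → ℝ) (t : ℝ) :
    HasDerivAt (fun s : ℝ => quadForm P (NormedSpace.exp (s • B) *ᵥ x))
      (quadForm (Bᵀ * P + P * B) (NormedSpace.exp (t • B) *ᵥ x)) t := by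
  have hy := hasDerivAt_exp_smul_mulVec B x t
  rw [quadForm_transpose_mul_add_mul]
  exact hy.dotProduct (hy.mulVec P)

end MatrixExp

theorem exp_mul_mul_le_of_hasDerivAt {V V' : ℝ → ℝ} {c : ℝ} (hV : ∀ s, HasDerivAt V (V' s) s)
    (hV' : ∀ s, c * V s ≤ V' s) {t : ℝ} (ht : 0 ≤ t) :
    Real.exp (c * t) * V 0 ≤ V t := by
  have hmono : Monotone fun s => Real.exp (-(c * s)) * V s := by
    refine monotone_of_hasDerivAt_nonneg (f' := fun s => Real.exp (-(c * s)) * (V' s - c * V s))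
      (fun s => ?_) fun s => mul_nonneg (Real.exp_pos _).le (sub_nonneg.2 (hV' s))
    have hexp : HasDerivAt (fun s => Real.exp (-(c * s))) (Real.exp (-(c * s)) * -c) s := by
      simpa using ((hasDerivAt_id s).const_mul c).neg.exp
    exact (hexp.mul (hV s)).congr_deriv (by ring)
  have h0t : V 0 ≤ Real.exp (-(c * t)) * V t := by simpa using hmono ht
  calc Real.exp (c * t) * V 0 ≤ Real.exp (c * t) * (Real.exp (-(c * t)) * V t) :=
        mul_le_mul_of_nonneg_left h0t (Real.exp_pos _).le
    _ = V t := by rw [← mul_assoc, ← Real.exp_add, add_neg_cancel, Real.exp_zero, one_mul]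

theorem exponential_estimate_in_Kplus_general {n : ℕ}
    (A P : Matrix (Fin n) (Fin n) ℝ) (lam eps μmax : ℝ)
    (heps : 0 < eps)
    (hPsymm : P.IsSymm)
    (hμmax : IsGreatest {μ : ℝ | μ ∈ P.charpoly.roots} μmax) (hμmaxpos : 0 < μmax)
    (hLMI : matLE (Aᵀ * P + P * A)
      (-((2 * lam) • P) - eps • (1 : Matrix (Fin n) (Fin n) ℝ))) :
    ∀ t : ℝ, 0 ≤ t → ∀ x : Fin n → ℝ, 0 ≤ quadForm P x →
      Real.exp ((2 * lam + eps / μmax) * t) * quadForm P x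
        ≤ quadForm P ((NormedSpace.exp (-(t • A))).mulVec x) := by
  intro t ht x _
  have hP : P.IsHermitian := isHermitian_iff_isSymm.2 hPsymm
  have hspec : ∀ a ∈ spectrum ℝ P, a ≤ μmax := fun a ha =>
    hμmax.2 <| (Polynomial.mem_roots P.charpoly_monic.ne_zero).2 <|
      mem_spectrum_iff_isRoot_charpoly.1 ha
  have hneg (y) : quadForm ((-A)ᵀ * P + P * -A) y = -quadForm (Aᵀ * P + P * A) y := by
    simp only [quadForm, transpose_neg, neg_mul, mul_neg, add_mulVec, neg_mulVec, dotProduct_add,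
      dotProduct_neg]
    ring
  have hgrowth := exp_mul_mul_le_of_hasDerivAt (hasDerivAt_quadForm_exp_smul_mulVec (-A) P x)
    (fun s => by
      rw [hneg]
      exact mul_quadForm_le_neg_quadForm_of_matLE hP heps.le hμmaxpos hspec hLMI _) ht
  simpa [smul_neg] using hgrowth

/-- exponential growth estimate of the quadratic form inside K⁺
under the backward flow. -/
theorem exponential_estimate_in_Kplus {n : ℕ}
    (A P : Matrix (Fin n) (Fin n) ℝ) (p : ℕ) (lam eps μmax : ℝ)
    (hlam : 0 ≤ lam) (heps : 0 < eps) (hpn : p ≤ n - 1)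
    (hPsymm : P.IsSymm) (hPinertia : hasInertia P p)
    (hμmax : IsGreatest {μ : ℝ | μ ∈ P.charpoly.roots} μmax) (hμmaxpos : 0 < μmax)
    (hLMI : matLE (Aᵀ * P + P * A)
      (-((2 * lam) • P) - eps • (1 : Matrix (Fin n) (Fin n) ℝ))) :
    ∀ t : ℝ, 0 ≤ t → ∀ x : Fin n → ℝ, 0 ≤ quadForm P x →
      Real.exp ((2 * lam + eps / μmax) * t) * quadForm P x
        ≤ quadForm P ((NormedSpace.exp (-(t • A))).mulVec x) :=
  exponential_estimate_in_Kplus_general A P lam eps μmax heps hPsymm hμmax hμmaxpos hLMI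
end

section
/- Let f : ℝⁿ → ℝⁿ be continuously differentiable with Jacobian Df(x), let λ > 0, ε > 0, and let P be a real symmetric n×n matrix with inertia p such that Df(x)ᵀP + P·Df(x) ⪯ −2λP − εI for all x ∈ ℝⁿ. Let A ⊆ ℝⁿ be a compact set that is invariant under complete solutions: for every a ∈ A there exists a differentiable curve x : ℝ → ℝⁿ with x(0) = a, x′(t) = f(x(t)) for all t ∈ ℝ, and x(t) ∈ A for all t ∈ ℝ. Then any two distinct points of A are separated by the quadratic form of P: for all z₁, z₂ ∈ A with z₁ ≠ z₂, (z₁−z₂)ᵀP(z₁−z₂) < 0. -/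
open Matrix

/-! For two complete solutions `x`, `y` in `A`, the mean value theorem turns the matrix
inequality into the incremental dissipation inequality `V' ≤ -2λV - ε|x - y|²` for
`V = (x - y)ᵀP(x - y)`. Hence `e^{2λt} V(t)` is antitone, and since `V` is bounded on the
compact set `A`, letting `t → -∞` forces `V ≤ 0` everywhere. If `V(0) = 0`, then `0` would be a
maximum of `V`, so `V'(0) = 0`, contradicting `V'(0) ≤ -ε|z₁ - z₂|² < 0`. -/

theorem Matrix.IsSymm.dotProduct_mulVec_comm {m R : Type*} [Fintype m] [CommSemiring R]
    {P : Matrix m m R} (hP : P.IsSymm) (x y : m → R) : x ⬝ᵥ P *ᵥ y = y ⬝ᵥ P *ᵥ x := by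
  simpa [hP.eq] using (dotProduct_transpose_mulVec P y x).symm

section DotProductCalculus

variable {m : Type*} [Fintype m] {u v : ℝ → m → ℝ} {u' v' : m → ℝ} {t : ℝ}

theorem hasDerivAt_dotProduct (hu : HasDerivAt u u' t) (hv : HasDerivAt v v' t) :
    HasDerivAt (fun s => u s ⬝ᵥ v s) (u' ⬝ᵥ v t + u t ⬝ᵥ v') t := by
  simpa [dotProduct, Finset.sum_add_distrib] using
    HasDerivAt.fun_sum fun i _ => (hasDerivAt_pi.mp hu i).mul (hasDerivAt_pi.mp hv i)

theorem hasDerivAt_mulVec {k : Type*} (M : Matrix k m ℝ) (hu : HasDerivAt u u' t) :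
    HasDerivAt (fun s => M *ᵥ u s) (M *ᵥ u') t :=
  hasDerivAt_pi.mpr fun i => by
    simpa [mulVec] using hasDerivAt_dotProduct (hasDerivAt_const t (M i)) hu

theorem hasDerivAt_quadForm {P : Matrix m m ℝ} (hP : P.IsSymm) (hu : HasDerivAt u u' t) :
    HasDerivAt (fun s => quadForm P (u s)) (2 * (u t ⬝ᵥ P *ᵥ u')) t := by
  refine (hasDerivAt_dotProduct hu (hasDerivAt_mulVec P hu)).congr_deriv ?_
  rw [hP.dotProduct_mulVec_comm u']
  ring

end DotProductCalculus

theorem continuous_quadForm {m : Type*} [Fintype m] (P : Matrix m m ℝ) :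
    Continuous (quadForm P) := by
  unfold quadForm dotProduct mulVec
  fun_prop

theorem exists_dotProduct_sub_eq_dotProduct_mulVec {m : Type*} [Fintype m]
    {f : (m → ℝ) → m → ℝ} {J : (m → ℝ) → Matrix m m ℝ}
    (hJ : ∀ x, HasFDerivAt f (J x).mulVecLin.toContinuousLinearMap x) (w u v : m → ℝ) :
    ∃ x, w ⬝ᵥ (f u - f v) = w ⬝ᵥ (J x *ᵥ (u - v)) := by
  set γ : ℝ → m → ℝ := fun s => v + s • (u - v)
  have hγ : ∀ s, HasDerivAt γ (u - v) s := fun s => by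
    simpa [γ] using ((hasDerivAt_id s).smul_const (u - v)).const_add v
  have hfγ : ∀ s, HasDerivAt (fun s => w ⬝ᵥ f (γ s)) (w ⬝ᵥ (J (γ s) *ᵥ (u - v))) s :=
    fun s => by simpa using
      hasDerivAt_dotProduct (hasDerivAt_const s w) ((hJ (γ s)).comp_hasDerivAt s (hγ s))
  obtain ⟨c, -, hc⟩ := exists_hasDerivAt_eq_slope _ _ one_pos
    (fun s _ => (hfγ s).continuousAt.continuousWithinAt) fun s _ => hfγ s
  refine ⟨γ c, ?_⟩
  simpa [γ, dotProduct_sub] using hc.symm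

theorem two_mul_dotProduct_mulVec_mulVec_le {m : Type*} [Fintype m] [DecidableEq m]
    {P J : Matrix m m ℝ} (hP : P.IsSymm) {lam eps : ℝ}
    (hLMI : matLE (Jᵀ * P + P * J) (-((2 * lam) • P) - eps • (1 : Matrix m m ℝ)))
    (e : m → ℝ) :
    2 * (e ⬝ᵥ P *ᵥ (J *ᵥ e)) ≤ -(2 * lam) * quadForm P e - eps * (e ⬝ᵥ e) := by
  have h := hLMI.dotProduct_mulVec_nonneg e
  have hsym : e ⬝ᵥ Jᵀ *ᵥ (P *ᵥ e) = e ⬝ᵥ P *ᵥ (J *ᵥ e) := by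
    rw [dotProduct_transpose_mulVec, hP.dotProduct_mulVec_comm, dotProduct_comm]
  simp only [star_trivial, sub_mulVec, add_mulVec, neg_mulVec, smul_mulVec, one_mulVec,
    dotProduct_sub, dotProduct_add, dotProduct_neg, dotProduct_smul, smul_eq_mul,
    ← mulVec_mulVec, hsym] at h
  unfold quadForm
  linarith

theorem two_mul_dotProduct_mulVec_sub_le {m : Type*} [Fintype m] [DecidableEq m]
    {f : (m → ℝ) → m → ℝ} {J : (m → ℝ) → Matrix m m ℝ}
    (hJ : ∀ x, HasFDerivAt f (J x).mulVecLin.toContinuousLinearMap x)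
    {P : Matrix m m ℝ} (hP : P.IsSymm) {lam eps : ℝ}
    (hLMI : ∀ x, matLE ((J x)ᵀ * P + P * J x)
      (-((2 * lam) • P) - eps • (1 : Matrix m m ℝ)))
    (u v : m → ℝ) :
    2 * ((u - v) ⬝ᵥ P *ᵥ (f u - f v))
      ≤ -(2 * lam) * quadForm P (u - v) - eps * ((u - v) ⬝ᵥ (u - v)) := by
  obtain ⟨ξ, hξ⟩ := exists_dotProduct_sub_eq_dotProduct_mulVec hJ ((u - v) ᵥ* P) u v
  rw [dotProduct_mulVec, hξ, ← dotProduct_mulVec]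
  exact two_mul_dotProduct_mulVec_mulVec_le hP (hLMI ξ) (u - v)

theorem bddAbove_range_quadForm_sub {m : Type*} [Fintype m] (P : Matrix m m ℝ)
    {A : Set (m → ℝ)} (hA : IsCompact A) {x y : ℝ → m → ℝ} (hx : ∀ t, x t ∈ A)
    (hy : ∀ t, y t ∈ A) : BddAbove (Set.range fun t => quadForm P (x t - y t)) := by
  refine ((hA.prod hA).image (f := fun z => quadForm P (z.1 - z.2))
    ((continuous_quadForm P).comp (continuous_fst.sub continuous_snd))).bddAbove.mono ?_
  rintro _ ⟨t, rfl⟩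
  exact ⟨(x t, y t), Set.mk_mem_prod (hx t) (hy t), rfl⟩

open Real Filter Topology Set in
theorem nonpos_of_hasDerivAt_le_neg_mul {V V' : ℝ → ℝ} {c : ℝ} (hc : 0 < c)
    (hV : ∀ t, HasDerivAt V (V' t) t) (hV' : ∀ t, V' t ≤ -c * V t)
    (hbdd : BddAbove (range V)) (t : ℝ) : V t ≤ 0 := by
  obtain ⟨C, hC⟩ := hbdd
  have hW : Antitone fun s => exp (c * s) * V s := by
    refine antitone_of_hasDerivAt_nonpos
      (fun s => ((hasDerivAt_id' s).const_mul c).exp.mul (hV s)) fun s => ?_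
    have := mul_le_mul_of_nonneg_left (hV' s) (exp_pos (c * s)).le
    simp only [Pi.zero_apply]
    linarith
  have hlim : Tendsto (fun s => exp (c * (t - s)) * C) atTop (𝓝 0) := by
    have : Tendsto (fun s => c * (t - s)) atTop atBot :=
      (tendsto_const_nhds.add_atBot tendsto_neg_atTop_atBot).const_mul_atBot hc
    simpa using (tendsto_exp_atBot.comp this).mul_const C
  have hWt : exp (c * t) * V t ≤ 0 := by
    refine ge_of_tendsto hlim (eventually_ge_atTop 0 |>.mono fun s hs => ?_)
    calc exp (c * t) * V t ≤ exp (c * (t - s)) * V (t - s) := hW (by linarith)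
      _ ≤ exp (c * (t - s)) * C := by gcongr; exact hC ⟨t - s, rfl⟩
  exact nonpos_of_mul_nonpos_right hWt (exp_pos _)

theorem compact_invariant_set_separated_general {n : ℕ}
    (f : (Fin n → ℝ) → (Fin n → ℝ)) (J : (Fin n → ℝ) → Matrix (Fin n) (Fin n) ℝ)
    (hJ : IsJacobianOf J f)
    (P : Matrix (Fin n) (Fin n) ℝ)
    (hPsymm : P.IsSymm)
    (lam eps : ℝ) (hlam : 0 < lam) (heps : 0 < eps)
    (hLMI : ∀ x : Fin n → ℝ, matLE ((J x)ᵀ * P + P * J x)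
      (-((2 * lam) • P) - eps • (1 : Matrix (Fin n) (Fin n) ℝ)))
    (A : Set (Fin n → ℝ)) (hAcompact : IsCompact A)
    (hAinv : ∀ a ∈ A, ∃ x : ℝ → Fin n → ℝ, x 0 = a ∧
      (∀ t : ℝ, HasDerivAt x (f (x t)) t) ∧ (∀ t : ℝ, x t ∈ A)) :
    ∀ z₁ ∈ A, ∀ z₂ ∈ A, z₁ ≠ z₂ → quadForm P (z₁ - z₂) < 0 := by
  intro z₁ hz₁ z₂ hz₂ hne
  obtain ⟨x, rfl, hx, hxA⟩ := hAinv z₁ hz₁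
  obtain ⟨y, rfl, hy, hyA⟩ := hAinv z₂ hz₂
  set e := fun t => x t - y t
  have hV : ∀ t, HasDerivAt (fun s => quadForm P (e s))
      (2 * (e t ⬝ᵥ P *ᵥ (f (x t) - f (y t)))) t :=
    fun t => hasDerivAt_quadForm hPsymm ((hx t).sub (hy t))
  have hV' := fun t => two_mul_dotProduct_mulVec_sub_le hJ hPsymm hLMI (x t) (y t)
  have he_sq : ∀ t, 0 ≤ e t ⬝ᵥ e t := fun t => by
    simpa only [star_trivial] using dotProduct_self_star_nonneg (e t)
  have hnonpos := nonpos_of_hasDerivAt_le_neg_mul (by positivity) hV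
    (fun t => (hV' t).trans (sub_le_self _ (mul_nonneg heps.le (he_sq t))))
    (bddAbove_range_quadForm_sub P hAcompact hxA hyA)
  have he0 : 0 < e 0 ⬝ᵥ e 0 := by
    simpa only [star_trivial] using dotProduct_self_star_pos_iff.2 (sub_ne_zero.2 hne)
  refine (hnonpos 0).lt_of_ne fun hzero => ?_
  have hmax : IsLocalMax (fun t => quadForm P (e t)) 0 :=
    Filter.Eventually.of_forall fun s => (hnonpos s).trans_eq hzero.symm
  have hdecay := hV' 0
  rw [hmax.hasDerivAt_eq_zero (hV 0), hzero] at hdecay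
  linarith [mul_pos heps he0]

/-- on a compact invariant set of a strictly p-dominant system (λ > 0),
any two distinct points are strictly separated by the quadratic form of P. -/
theorem compact_invariant_set_separated {n : ℕ}
    (f : (Fin n → ℝ) → (Fin n → ℝ)) (J : (Fin n → ℝ) → Matrix (Fin n) (Fin n) ℝ)
    (hf : ContDiff ℝ 1 f) (hJ : IsJacobianOf J f)
    (P : Matrix (Fin n) (Fin n) ℝ) (p : ℕ)
    (hPsymm : P.IsSymm) (hPinertia : hasInertia P p)
    (lam eps : ℝ) (hlam : 0 < lam) (heps : 0 < eps)
    (hLMI : ∀ x : Fin n → ℝ, matLE ((J x)ᵀ * P + P * J x)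
      (-((2 * lam) • P) - eps • (1 : Matrix (Fin n) (Fin n) ℝ)))
    (A : Set (Fin n → ℝ)) (hAcompact : IsCompact A)
    (hAinv : ∀ a ∈ A, ∃ x : ℝ → Fin n → ℝ, x 0 = a ∧
      (∀ t : ℝ, HasDerivAt x (f (x t)) t) ∧ (∀ t : ℝ, x t ∈ A)) :
    ∀ z₁ ∈ A, ∀ z₂ ∈ A, z₁ ≠ z₂ → quadForm P (z₁ - z₂) < 0 :=
  compact_invariant_set_separated_general f J hJ P hPsymm lam eps hlam heps hLMI A hAcompact hAinv
end
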